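/- arXiv:2604.22474 — 5 statements merged into one kernel-verified Lean document; each statement's English description precedes it below -/
import Mathlib

section
/- Let (X,ρ) be a metric space, μ a Borel measure on X all of whose balls have finite positive measure, w : X → [0,∞] a measurable function, and let ν be the measure with dν = w dμ. Suppose there are t ∈ (1,∞) and C₀ ≥ 1 such that the reverse Hölder inequality (μ(B)⁻¹ ∫_B w^t dμ)^{1/t} ≤ C₀ ν(B)/μ(B) holds for every metric ball B of X (with ν(B) finite and positive). Let t' = t/(t−1). Then for every metric ball B, every r ∈ (0,∞) and every measurable function f one has osc_{r,ν}(f;B) ≤ C₀^{1/r} · osc_{rt',μ}(f;B). -/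
open MeasureTheory Metric ENNReal Set

noncomputable section

/-! ### Oscillation -/

/-- The oscillation `osc_{r,μ}(f; E)`. -/
def osc {X : Type*} [MeasurableSpace X] (r : ℝ) (μ : Measure X) (E : Set X) (f : X → ℝ) :
    ℝ≥0∞ :=
  ⨅ c : ℝ, ((μ E)⁻¹ * ∫⁻ x in E, (ENNReal.ofReal |f x - c|) ^ r ∂μ) ^ (1 / r)

/-! ### Metric measure notions -/

/-- A doubling measure: balls have finite positive measure and the doubling condition holds. -/
def IsDoublingMeasure {X : Type*} [MetricSpace X] [MeasurableSpace X] (μ : Measure X) : Prop :=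
  (∀ (x : X) (R : ℝ), 0 < R → 0 < μ (ball x R) ∧ μ (ball x R) < ∞) ∧
  ∃ C : ℝ, ∀ (x : X) (R : ℝ), 0 < R → μ (ball x (2 * R)) ≤ ENNReal.ofReal C * μ (ball x R)

/-- The `A∞` relation between two measures. -/
def AInftyRel {X : Type*} [MetricSpace X] [MeasurableSpace X] (μ ν : Measure X) : Prop :=
  ∃ ε δ : ℝ, 0 < ε ∧ ε < 1 ∧ 0 < δ ∧ δ < 1 ∧
    ∀ (x : X) (R : ℝ), 0 < R → ∀ E : Set X, MeasurableSet E → E ⊆ ball x R →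
      μ E ≤ ENNReal.ofReal ε * μ (ball x R) →
      ν E ≤ ENNReal.ofReal (1 - δ) * ν (ball x R)

/-- Separation/dimension condition: every ball `B(x,R)` contains at most `C (R/r)^d` points
with pairwise distances `≥ r`. -/
def SeparationDim (X : Type*) [MetricSpace X] (d : ℝ) : Prop :=
  ∃ C : ℝ, 0 < C ∧ ∀ (x : X) (r R : ℝ), 0 < r → r ≤ R →
    ∀ s : Finset X, (↑s : Set X) ⊆ ball x R →
      (∀ p ∈ s, ∀ q ∈ s, p ≠ q → r ≤ dist p q) → (s.card : ℝ) ≤ C * (R / r) ^ d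

/-- Ahlfors `d`-regularity of `(X, ρ, ν)`. -/
def IsAhlforsRegular {X : Type*} [MetricSpace X] [MeasurableSpace X]
    (ν : Measure X) (d : ℝ) : Prop :=
  ∃ C : ℝ, 1 ≤ C ∧ ∀ (x : X) (r R : ℝ), 0 < r → r ≤ R →
    ENNReal.ofReal R ≤ ENNReal.ofReal C * EMetric.diam (Set.univ : Set X) →
      ENNReal.ofReal ((R / r) ^ d) * ν (ball x r) ≤ ENNReal.ofReal C * ν (ball x R) ∧
      ν (ball x R) ≤ ENNReal.ofReal C * (ENNReal.ofReal ((R / r) ^ d) * ν (ball x r))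

/-- Lower dimension `d` of `(X, ρ, ν)`. -/
def HasLowerDimension {X : Type*} [MetricSpace X] [MeasurableSpace X]
    (ν : Measure X) (d : ℝ) : Prop :=
  ∃ C : ℝ, 1 ≤ C ∧ ∀ (x : X) (r R : ℝ), 0 < r → r ≤ R →
    ENNReal.ofReal R ≤ ENNReal.ofReal C * EMetric.diam (Set.univ : Set X) →
      ENNReal.ofReal ((R / r) ^ d) * ν (ball x r) ≤ ENNReal.ofReal C * ν (ball x R)

/-- The pointwise lower Lipschitz constant `lip f`. -/
def lipSlope {X : Type*} [MetricSpace X] (f : X → ℝ) (x : X) : ℝ≥0∞ :=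
  Filter.liminf (fun t : ℝ => ⨆ y ∈ closedBall x t, ENNReal.ofReal (|f x - f y| / t))
    (nhdsWithin 0 (Set.Ioi 0))

/-- The `(1,p)`-Poincaré inequality for `(X, ρ, ν)`. -/
def SupportsPoincare {X : Type*} [MetricSpace X] [MeasurableSpace X]
    (ν : Measure X) (p : ℝ) : Prop :=
  ∃ lam cP : ℝ, 0 < lam ∧ 0 < cP ∧
    ∀ f : X → ℝ, (∃ L : NNReal, LipschitzWith L f) → ∀ (x : X) (R : ℝ), 0 < R →
      (ν (ball x R))⁻¹ *
          ∫⁻ y in ball x R, ENNReal.ofReal |f y - ⨍ z in ball x R, f z ∂ν| ∂ν ≤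
        ENNReal.ofReal cP *
          ((ν (ball x (lam * R)))⁻¹ * ∫⁻ y in ball x (lam * R), lipSlope f y ^ p ∂ν) ^ (1 / p)

/-- The `A₂(μ)` condition for a weight `w`. -/
def IsA2Weight {X : Type*} [MetricSpace X] [MeasurableSpace X]
    (μ : Measure X) (w : X → ℝ≥0∞) : Prop :=
  Measurable w ∧ ∃ C : ℝ, ∀ (x : X) (R : ℝ), 0 < R →
    ((μ (ball x R))⁻¹ * ∫⁻ y in ball x R, w y ∂μ) *
      ((μ (ball x R))⁻¹ * ∫⁻ y in ball x R, (w y)⁻¹ ∂μ) ≤ ENNReal.ofReal C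

/-! ### Kernels and singular integral operators -/

/-- A standard (Calderón–Zygmund) kernel of Hölder exponent `η` with respect to `μ`. -/
def IsStandardKernel {X : Type*} [MetricSpace X] [MeasurableSpace X]
    (μ : Measure X) (K : X → X → ℂ) (η : ℝ) : Prop :=
  ∃ C : ℝ, 0 < C ∧ ∃ A : ℝ, 2 ≤ A ∧
    (∀ x y : X, x ≠ y → ‖K x y‖ ≤ C / (μ (ball x (dist x y))).toReal) ∧
    (∀ x x' y : X, x ≠ y → x' ≠ y → dist x x' ≤ dist x y / A →
      ‖K x y - K x' y‖ + ‖K y x - K y x'‖ ≤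
        C * (dist x x' / dist x y) ^ η / (μ (ball x (dist x y))).toReal)

/-- Non-degeneracy of a kernel. -/
def IsNondegenerateKernel {X : Type*} [MetricSpace X] [MeasurableSpace X]
    (μ : Measure X) (K : X → X → ℂ) : Prop :=
  ∃ c : ℝ, 1 ≤ c ∧ ∀ (x : X) (r : ℝ), 0 < r → ∃ y : X,
    r / c ≤ dist x y ∧ dist x y ≤ c * r ∧
    c⁻¹ / (μ (ball x (dist x y))).toReal ≤ ‖K x y‖ + ‖K y x‖

/-- Bounded functions with bounded support. -/
def IsBddWithBddSupport {X : Type*} [MetricSpace X] (f : X → ℂ) : Prop :=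
  Bornology.IsBounded (tsupport f) ∧ ∃ M : ℝ, ∀ x : X, ‖f x‖ ≤ M

/-- `T` is a singular integral operator on `L²(μ)` with kernel `K`. -/
def IsSIO {X : Type*} [MetricSpace X] [MeasurableSpace X]
    (μ : Measure X) (T : Lp ℂ 2 μ →L[ℂ] Lp ℂ 2 μ) (K : X → X → ℂ) : Prop :=
  ∀ (f : X → ℂ) (hf : MemLp f 2 μ), IsBddWithBddSupport f →
    ∀ᵐ x ∂μ, x ∉ tsupport f → (T (hf.toLp f) : X → ℂ) x = ∫ y, K x y * f y ∂μ

/-- `S` is a bounded extension of the commutator `[b, T] : f ↦ b·Tf − T(bf)` on `L²(μ)`. -/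
def IsCommutatorExtension {X : Type*} [MetricSpace X] [MeasurableSpace X]
    (μ : Measure X) (b : X → ℝ) (T S : Lp ℂ 2 μ →L[ℂ] Lp ℂ 2 μ) : Prop :=
  ∀ (f : X → ℂ) (hf : MemLp f 2 μ), IsBddWithBddSupport f →
    ∀ hbf : MemLp (fun x => (b x : ℂ) * f x) 2 μ,
      (S (hf.toLp f) : X → ℂ) =ᵐ[μ]
        fun x => (b x : ℂ) * (T (hf.toLp f) : X → ℂ) x - (T (hbf.toLp _) : X → ℂ) x

/-- `S` is a bounded extension of the commutator `[b, T]` on the weighted space `L²(w dμ)`,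
where `T` is an operator on `L²(μ)`. -/
def IsCommutatorExtensionWeighted {X : Type*} [MetricSpace X] [MeasurableSpace X]
    (μ : Measure X) (w : X → ℝ≥0∞) (b : X → ℝ) (T : Lp ℂ 2 μ →L[ℂ] Lp ℂ 2 μ)
    (S : Lp ℂ 2 (μ.withDensity w) →L[ℂ] Lp ℂ 2 (μ.withDensity w)) : Prop :=
  ∀ (f : X → ℂ) (hf : MemLp f 2 μ) (hfw : MemLp f 2 (μ.withDensity w)),
    IsBddWithBddSupport f →
    ∀ hbf : MemLp (fun x => (b x : ℂ) * f x) 2 μ,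
      (S (hfw.toLp f) : X → ℂ) =ᵐ[μ.withDensity w]
        fun x => (b x : ℂ) * (T (hf.toLp f) : X → ℂ) x - (T (hbf.toLp _) : X → ℂ) x

/-! ### Approximation numbers and Schatten norms -/

/-- The `n`-th approximation number of a bounded operator. -/
def approxNum {E : Type*} [NormedAddCommGroup E] [NormedSpace ℂ E]
    (n : ℕ) (A : E →L[ℂ] E) : ℝ :=
  sInf {t : ℝ | ∃ F : E →L[ℂ] E, LinearMap.rank (F : E →ₗ[ℂ] E) ≤ n ∧ t = ‖A - F‖}

/-- The Schatten `S^p` norm of a bounded operator. -/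
def schattenNorm {E : Type*} [NormedAddCommGroup E] [NormedSpace ℂ E]
    (p : ℝ) (A : E →L[ℂ] E) : ℝ≥0∞ :=
  (∑' n : ℕ, ENNReal.ofReal (approxNum n A ^ p)) ^ (1 / p)

/-- The weak Schatten `S^{d,∞}` norm of a bounded operator. -/
def weakSchattenNorm {E : Type*} [NormedAddCommGroup E] [NormedSpace ℂ E]
    (d : ℝ) (A : E →L[ℂ] E) : ℝ≥0∞ :=
  ⨆ n : ℕ, ENNReal.ofReal ((n + 1 : ℝ) ^ (1 / d) * approxNum n A)

/-! ### Function space norms -/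

/-- The Besov-type norm `‖b‖_{Ḃ^p(ν)}`. -/
def besovNorm {X : Type*} [MetricSpace X] [MeasurableSpace X]
    (ν : Measure X) (p : ℝ) (b : X → ℝ) : ℝ≥0∞ :=
  (∫⁻ x, ∫⁻ y, ENNReal.ofReal |b x - b y| ^ p / ν (ball x (dist x y)) ^ 2 ∂ν ∂ν) ^ (1 / p)

/-- The classical Besov norm `‖b‖_{Ḃ^{d/p}_{p,p}(ν)}`. -/
def besovClassicalNorm {X : Type*} [MetricSpace X] [MeasurableSpace X]
    (ν : Measure X) (d p : ℝ) (b : X → ℝ) : ℝ≥0∞ :=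
  (∫⁻ x, ∫⁻ y, ENNReal.ofReal |b x - b y| ^ p / ENNReal.ofReal (dist x y ^ (2 * d)) ∂ν ∂ν) ^
    (1 / p)

/-- `h` is a Hajłasz upper gradient of `b` with respect to `ν`. -/
def IsHajlaszGradient {X : Type*} [MetricSpace X] [MeasurableSpace X]
    (ν : Measure X) (b : X → ℝ) (h : X → ℝ≥0∞) : Prop :=
  ∀ᵐ x ∂ν, ∀ᵐ y ∂ν,
    ENNReal.ofReal |b x - b y| ≤ ENNReal.ofReal (dist x y) * (h x + h y)

/-- The Hajłasz–Sobolev norm `‖b‖_{Ṁ^{1,p}(ν)}`. -/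
def hajlaszNorm {X : Type*} [MetricSpace X] [MeasurableSpace X]
    (ν : Measure X) (p : ℝ) (b : X → ℝ) : ℝ≥0∞ :=
  ⨅ (h : X → ℝ≥0∞) (_ : Measurable h) (_ : IsHajlaszGradient ν b h),
    (∫⁻ x, h x ^ p ∂ν) ^ (1 / p)

end

/-!
Write `dν = w dμ`. On a set `E`, Hölder's inequality for the normalized measure `μ(E)⁻¹ μ|_E`
bounds the `μ`-average of `w g` by the `L^t`-average of `w` times the `L^{t'}`-average of `g`;
the reverse Hölder inequality turns the first factor into `C₀ ν(E)/μ(E)`, so the `ν`-average of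
`g` is at most `C₀` times the `L^{t'}(μ)`-average of `g`. Applied to `g = |f - c|^r` for each
constant `c` and then optimized over `c`, this gives the comparison of oscillations.
-/

namespace MeasureTheory

variable {X : Type*} [MeasurableSpace X] {μ : Measure X} {E : Set X}

theorem setLAverage_mul_le_of_holderConjugate {p q : ℝ} (hpq : p.HolderConjugate q)
    {f g : X → ℝ≥0∞} (hf : AEMeasurable f (μ.restrict E)) (hg : AEMeasurable g (μ.restrict E)) :
    (μ E)⁻¹ * ∫⁻ x in E, f x * g x ∂μ ≤
      ((μ E)⁻¹ * ∫⁻ x in E, f x ^ p ∂μ) ^ (1 / p) *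
        ((μ E)⁻¹ * ∫⁻ x in E, g x ^ q ∂μ) ^ (1 / q) := by
  simpa only [lintegral_smul_measure, smul_eq_mul, Pi.mul_apply] using
    ENNReal.lintegral_mul_le_Lp_mul_Lq ((μ E)⁻¹ • μ.restrict E) hpq
      (hf.smul_measure _) (hg.smul_measure _)

theorem setLAverage_withDensity_le_of_reverseHolder {w : X → ℝ≥0∞} (hw : Measurable w)
    (hE : MeasurableSet E) (hμE : μ E ≠ ∞) {t t' : ℝ} (htt' : t.HolderConjugate t')
    {K : ℝ≥0∞}
    (hRH : ((μ E)⁻¹ * ∫⁻ x in E, w x ^ t ∂μ) ^ (1 / t) ≤ K * (μ.withDensity w E / μ E))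
    {g : X → ℝ≥0∞} (hg : Measurable g) :
    (μ.withDensity w E)⁻¹ * ∫⁻ x in E, g x ∂μ.withDensity w ≤
      K * ((μ E)⁻¹ * ∫⁻ x in E, g x ^ t' ∂μ) ^ (1 / t') := by
  set n := μ.withDensity w E
  -- If `ν(E)` is `0` or `∞`, the left side vanishes by the conventions of `ℝ≥0∞`.
  rcases eq_or_ne n 0 with hn0 | hn0
  · simp [Measure.restrict_eq_zero.2 hn0]
  rcases eq_or_ne n ∞ with hn | hn
  · simp [hn]
  have hμE0 : μ E ≠ 0 := fun h ↦ hn0 (withDensity_absolutelyContinuous μ w h)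
  have hnorm : n⁻¹ * μ E * (K * (n / μ E)) = K := by
    rw [div_eq_mul_inv, show n⁻¹ * μ E * (K * (n * (μ E)⁻¹)) = K * (n⁻¹ * n) * (μ E * (μ E)⁻¹)
      by ring, ENNReal.inv_mul_cancel hn0 hn, ENNReal.mul_inv_cancel hμE0 hμE, mul_one, mul_one]
  calc n⁻¹ * ∫⁻ x in E, g x ∂μ.withDensity w
      = n⁻¹ * μ E * ((μ E)⁻¹ * ∫⁻ x in E, w x * g x ∂μ) := by
        rw [setLIntegral_withDensity_eq_setLIntegral_mul μ hw hg hE, mul_assoc,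
          ← mul_assoc (μ E), ENNReal.mul_inv_cancel hμE0 hμE, one_mul]
        rfl
    _ ≤ n⁻¹ * μ E * (K * (n / μ E) * ((μ E)⁻¹ * ∫⁻ x in E, g x ^ t' ∂μ) ^ (1 / t')) := by
        refine mul_le_mul_right ((setLAverage_mul_le_of_holderConjugate htt' hw.aemeasurable
          hg.aemeasurable).trans (mul_le_mul_left hRH _)) _
    _ = K * ((μ E)⁻¹ * ∫⁻ x in E, g x ^ t' ∂μ) ^ (1 / t') := by
        rw [← mul_assoc, hnorm]

theorem osc_withDensity_le_of_reverseHolder {w : X → ℝ≥0∞} (hw : Measurable w)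
    (hE : MeasurableSet E) (hμE : μ E ≠ ∞) {t t' : ℝ} (htt' : t.HolderConjugate t')
    {K : ℝ≥0∞} (hK : K ≠ ∞)
    (hRH : ((μ E)⁻¹ * ∫⁻ x in E, w x ^ t ∂μ) ^ (1 / t) ≤ K * (μ.withDensity w E / μ E))
    {r : ℝ} (hr : 0 < r) {f : X → ℝ} (hf : Measurable f) :
    osc r (μ.withDensity w) E f ≤ K ^ (1 / r) * osc (r * t') μ E f := by
  have hKr : K ^ (1 / r) ≠ ∞ := ENNReal.rpow_ne_top_of_nonneg (by positivity) hK
  rw [osc, osc, ENNReal.mul_iInf fun h ↦ absurd h hKr]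
  refine le_iInf fun c ↦ (iInf_le _ c).trans ?_
  have hg : Measurable fun x ↦ ENNReal.ofReal |f x - c| ^ r :=
    ((hf.sub_const c).abs.ennreal_ofReal).pow_const r
  calc _ ≤ (K * ((μ E)⁻¹ * ∫⁻ x in E, (ENNReal.ofReal |f x - c| ^ r) ^ t' ∂μ) ^ (1 / t'))
        ^ (1 / r) :=
        ENNReal.rpow_le_rpow
          (setLAverage_withDensity_le_of_reverseHolder hw hE hμE htt' hRH hg) (by positivity)
    _ = _ := by
        have hexp : 1 / t' * (1 / r) = 1 / (r * t') := by field_simp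
        simp_rw [← ENNReal.rpow_mul]
        rw [ENNReal.mul_rpow_of_nonneg _ _ (by positivity), ← ENNReal.rpow_mul, hexp]

end MeasureTheory

theorem osc_le_of_reverseHolder_general {X : Type*} [MetricSpace X] [MeasurableSpace X] [BorelSpace X]
    (μ : Measure X)
    (hballs : ∀ (x : X) (R : ℝ), 0 < R → 0 < μ (ball x R) ∧ μ (ball x R) < ∞)
    (w : X → ℝ≥0∞) (hw : Measurable w) (ν : Measure X) (hν : ν = μ.withDensity w)
    (t : ℝ) (ht : 1 < t) (C₀ : ℝ)
    (hRH : ∀ (x : X) (R : ℝ), 0 < R →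
      ((μ (ball x R))⁻¹ * ∫⁻ y in ball x R, w y ^ t ∂μ) ^ (1 / t) ≤
        ENNReal.ofReal C₀ * (ν (ball x R) / μ (ball x R))) :
    ∀ (x : X) (R : ℝ), 0 < R → ∀ r : ℝ, 0 < r → ∀ f : X → ℝ, Measurable f →
      osc r ν (ball x R) f ≤
        ENNReal.ofReal C₀ ^ (1 / r) * osc (r * (t / (t - 1))) μ (ball x R) f := by
  intro x R hR r hr f hf
  subst hν
  exact osc_withDensity_le_of_reverseHolder hw measurableSet_ball (hballs x R hR).2.ne
    (.conjExponent ht) ENNReal.ofReal_ne_top (hRH x R hR) hr hf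

/-- Per-ball comparison of oscillations under a reverse Hölder hypothesis. -/
theorem osc_le_of_reverseHolder {X : Type*} [MetricSpace X] [MeasurableSpace X] [BorelSpace X]
    (μ : Measure X)
    (hballs : ∀ (x : X) (R : ℝ), 0 < R → 0 < μ (ball x R) ∧ μ (ball x R) < ∞)
    (w : X → ℝ≥0∞) (hw : Measurable w) (ν : Measure X) (hν : ν = μ.withDensity w)
    (t : ℝ) (ht : 1 < t) (C₀ : ℝ) (hC₀ : 1 ≤ C₀)
    (hballsν : ∀ (x : X) (R : ℝ), 0 < R → 0 < ν (ball x R) ∧ ν (ball x R) < ∞)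
    (hRH : ∀ (x : X) (R : ℝ), 0 < R →
      ((μ (ball x R))⁻¹ * ∫⁻ y in ball x R, w y ^ t ∂μ) ^ (1 / t) ≤
        ENNReal.ofReal C₀ * (ν (ball x R) / μ (ball x R))) :
    ∀ (x : X) (R : ℝ), 0 < R → ∀ r : ℝ, 0 < r → ∀ f : X → ℝ, Measurable f →
      osc r ν (ball x R) f ≤
        ENNReal.ofReal C₀ ^ (1 / r) * osc (r * (t / (t - 1))) μ (ball x R) f :=
  osc_le_of_reverseHolder_general μ hballs w hw ν hν t ht C₀ hRH
end

section
/- Let (X,ρ) be a metric space and let μ, ν be doubling Borel measures on X satisfying the A∞ relation, i.e., there exist ε, δ ∈ (0,1) such that for every metric ball B and every measurable E ⊆ B, μ(E) ≤ ε μ(B) implies ν(E) ≤ (1−δ) ν(B). Then μ and ν are mutually absolutely continuous: μ(E) = 0 if and only if ν(E) = 0 for every measurable set E. -/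
open MeasureTheory Metric ENNReal Set

/-!
If `μ E = 0`, the `A∞` condition applied to `E ∩ B` gives `ν (E ∩ B) ≤ (1 - δ) ν B` for every
ball `B`, so no point of `E` is a `ν`-density point of `E`. Lebesgue's density theorem for the
doubling measure `ν` (the space is separable, since disjoint balls of positive measure inside a
ball of finite measure are countably many) then forces `ν E = 0`. For the converse, passing to
complements inside a ball turns the `A∞` relation of `μ` to `ν` into the `A∞` relation of `ν`
to `μ`, with parameters `(δ / 2, ε)`.
-/

open Filter
open scoped Topology

section Separability

variable {X : Type*} [PseudoMetricSpace X]

theorem exists_pairwise_le_dist_forall_exists_dist_lt {ε : ℝ} (hε : 0 < ε) :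
    ∃ N : Set X, N.Pairwise (ε ≤ dist · ·) ∧ ∀ x, ∃ y ∈ N, dist x y < ε := by
  obtain ⟨N, hN⟩ := zorn_subset {N : Set X | N.Pairwise (ε ≤ dist · ·)} fun c hcS hc =>
    ⟨⋃₀ c, hc.pairwise_sUnion.2 fun s hs => hcS hs, fun s hs => subset_sUnion_of_mem hs⟩
  refine ⟨N, hN.prop, fun x => ?_⟩
  by_contra! hfar
  have hinsert : insert x N ⊆ N := hN.2 (hN.prop.insert fun y hy _ =>
    ⟨hfar y hy, dist_comm x y ▸ hfar y hy⟩) (subset_insert x N)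
  exact hε.not_ge (by simpa using hfar x (hinsert (mem_insert x N)))

variable [MeasurableSpace X] [OpensMeasurableSpace X]

theorem Set.Pairwise.countable_of_measure_ball {μ : Measure X}
    (hμ : ∀ (x : X) (R : ℝ), 0 < R → 0 < μ (ball x R) ∧ μ (ball x R) < ∞)
    {ε : ℝ} (hε : 0 < ε) {N : Set X} (hN : N.Pairwise (ε ≤ dist · ·)) : N.Countable := by
  rcases isEmpty_or_nonempty X with hX | ⟨⟨x₀⟩⟩
  · exact N.eq_empty_of_isEmpty ▸ countable_empty
  have hcover : N ⊆ ⋃ n : ℕ, N ∩ ball x₀ n := fun y hy => mem_iUnion.2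
    ⟨⌈dist y x₀⌉₊ + 1, hy, mem_ball.2 (by push_cast; linarith [Nat.le_ceil (dist y x₀)])⟩
  refine (countable_iUnion fun n => ?_).mono hcover
  have hdisj :
      Pairwise (Function.onFun Disjoint fun i : ↥(N ∩ ball x₀ n) => ball (i : X) (ε / 2)) :=
    fun i j hij => ball_disjoint_ball (by linarith [hN i.2.1 j.2.1 (Subtype.coe_ne_coe.2 hij)])
  have hfin : μ (⋃ i : ↥(N ∩ ball x₀ n), ball (i : X) (ε / 2)) ≠ ∞ :=
    ne_top_of_le_ne_top (hμ x₀ (n + ε / 2) (by positivity)).2.ne <| measure_mono <|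
      iUnion_subset fun i => ball_subset_ball' (by linarith [mem_ball.1 i.2.2])
  have hpos := Measure.countable_meas_pos_of_disjoint_of_meas_iUnion_ne_top μ
    (fun _ => measurableSet_ball) hdisj hfin
  exact countable_coe_iff.1 <| countable_univ_iff.1 <|
    hpos.mono fun i _ => (hμ i (ε / 2) (by positivity)).1

theorem secondCountableTopology_of_measure_ball {μ : Measure X}
    (hμ : ∀ (x : X) (R : ℝ), 0 < R → 0 < μ (ball x R) ∧ μ (ball x R) < ∞) :
    SecondCountableTopology X := by
  refine Metric.secondCountable_of_almost_dense_set fun ε hε => ?_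
  obtain ⟨N, hN, hdense⟩ := exists_pairwise_le_dist_forall_exists_dist_lt (X := X) hε
  exact ⟨N, hN.countable_of_measure_ball hμ hε, fun x =>
    (hdense x).imp fun _ ⟨hy, hxy⟩ => ⟨hy, hxy.le⟩⟩

end Separability

section Density

variable {X : Type*} [PseudoMetricSpace X] [MeasurableSpace X]

theorem le_mul_measure_closedBall_of_forall_gt [OpensMeasurableSpace X] {μ : Measure X}
    {x : X} {r : ℝ} {a θ : ℝ≥0∞} (hθ : θ ≠ ∞) (hfin : ∃ r' > r, μ (ball x r') ≠ ∞)
    (h : ∀ r' > r, a ≤ θ * μ (ball x r')) : a ≤ θ * μ (closedBall x r) := by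
  have hlim : Tendsto (fun r' => μ (ball x r')) (𝓝[>] r) (𝓝 (μ (closedBall x r))) := by
    rw [← biInter_gt_ball x r]
    exact tendsto_measure_biInter_gt (fun _ _ => measurableSet_ball.nullMeasurableSet)
      (fun _ _ _ h => ball_subset_ball h) hfin
  exact ge_of_tendsto (ENNReal.Tendsto.const_mul hlim (Or.inr hθ))
    (eventually_nhdsWithin_of_forall h)

theorem IsUnifLocDoublingMeasure.measure_eq_zero_of_eventually_measure_inter_closedBall_le
    [SecondCountableTopology X] [BorelSpace X] (μ : Measure X) [IsUnifLocDoublingMeasure μ]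
    [IsLocallyFiniteMeasure μ] {E : Set X} {θ : ℝ≥0∞} (hθ : θ < 1)
    (h : ∀ x, ∀ᶠ r in 𝓝[>] 0, μ (E ∩ closedBall x r) ≤ θ * μ (closedBall x r)) : μ E = 0 := by
  by_contra hE
  have : (ae (μ.restrict E)).NeBot := ae_neBot.2 fun h0 => hE (by simpa using congrArg (· E) h0)
  obtain ⟨x, hx⟩ := (IsUnifLocDoublingMeasure.ae_tendsto_measure_inter_div μ E 1).exists
  have hlim := hx (fun _ => x) id tendsto_id <| eventually_nhdsWithin_of_forall fun r hr =>
    mem_closedBall_self (by simpa using le_of_lt hr)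
  have : (1 : ℝ≥0∞) ≤ θ :=
    le_of_tendsto hlim <| (h x).mono fun r hr => ENNReal.div_le_of_le_mul hr
  exact (this.trans_lt hθ).false

end Density

section Doubling

variable {X : Type*} [MetricSpace X] [MeasurableSpace X] {μ ν : Measure X}

theorem IsDoublingMeasure.isLocallyFiniteMeasure (hμ : IsDoublingMeasure μ) :
    IsLocallyFiniteMeasure μ :=
  ⟨fun x => ⟨ball x 1, ball_mem_nhds x one_pos, (hμ.1 x 1 one_pos).2⟩⟩

theorem IsDoublingMeasure.isUnifLocDoublingMeasure (hμ : IsDoublingMeasure μ) :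
    IsUnifLocDoublingMeasure μ := by
  obtain ⟨-, C, hC⟩ := hμ
  refine ⟨⟨(ENNReal.ofReal C).toNNReal ^ 2, eventually_nhdsWithin_of_forall fun r hr x => ?_⟩⟩
  have hr : (0 : ℝ) < r := hr
  rw [ENNReal.coe_pow, ENNReal.coe_toNNReal ofReal_ne_top]
  calc μ (closedBall x (2 * r)) ≤ μ (ball x (2 * (2 * r))) :=
        measure_mono (closedBall_subset_ball (by linarith))
    _ ≤ ENNReal.ofReal C * (ENNReal.ofReal C * μ (ball x r)) := by
        grw [hC x (2 * r) (by positivity), hC x r hr]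
    _ ≤ ENNReal.ofReal C ^ 2 * μ (closedBall x r) := by
        rw [← mul_assoc, ← sq]
        gcongr
        exact ball_subset_closedBall

theorem AInftyRel.symm [OpensMeasurableSpace X] (hA : AInftyRel μ ν)
    (hμ : ∀ (x : X) (R : ℝ), 0 < R → μ (ball x R) < ∞)
    (hν : ∀ (x : X) (R : ℝ), 0 < R → 0 < ν (ball x R) ∧ ν (ball x R) < ∞) :
    AInftyRel ν μ := by
  obtain ⟨ε, δ, hε0, hε1, hδ0, hδ1, hA⟩ := hA
  refine ⟨δ / 2, ε, by linarith, by linarith, hε0, hε1, fun x R hR F hF hFB hνF => ?_⟩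
  set B := ball x R
  have hsplit (m : Measure X) : m F + m (B \ F) = m B := by
    rw [← measure_inter_add_sdiff B hF, inter_eq_right.2 hFB]
  have hνdiff : ¬ ν (B \ F) ≤ ENNReal.ofReal (1 - δ) * ν B := fun hle => by
    have hνB := hν x R hR
    have : ν B ≤ ENNReal.ofReal (1 - δ / 2) * ν B := calc
      ν B = ν F + ν (B \ F) := (hsplit ν).symm
      _ ≤ ENNReal.ofReal (δ / 2) * ν B + ENNReal.ofReal (1 - δ) * ν B := add_le_add hνF hle
      _ = ENNReal.ofReal (1 - δ / 2) * ν B := by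
        rw [← add_mul, ← ENNReal.ofReal_add (by linarith) (by linarith)]
        ring_nf
    refine this.not_gt ?_
    simpa using ENNReal.mul_lt_mul_left hνB.1.ne' hνB.2.ne
      ((ENNReal.ofReal_lt_one).2 (by linarith))
  have hμdiff : ENNReal.ofReal ε * μ B < μ (B \ F) := not_le.1 fun hle =>
    hνdiff (hA x R hR _ (measurableSet_ball.diff hF) sdiff_subset hle)
  refine (ENNReal.add_le_add_iff_right (mul_ne_top (ofReal_ne_top (r := ε)) (hμ x R hR).ne)).1 ?_
  calc μ F + ENNReal.ofReal ε * μ B ≤ μ F + μ (B \ F) := by gcongr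
    _ = μ B := hsplit μ
    _ = ENNReal.ofReal (1 - ε) * μ B + ENNReal.ofReal ε * μ B := by
      rw [← add_mul, ← ENNReal.ofReal_add (by linarith) hε0.le]
      simp

theorem AInftyRel.measure_eq_zero [BorelSpace X] (hA : AInftyRel μ ν) (hν : IsDoublingMeasure ν)
    {E : Set X} (hE : MeasurableSet E) (hμE : μ E = 0) : ν E = 0 := by
  have := secondCountableTopology_of_measure_ball hν.1
  have := hν.isLocallyFiniteMeasure
  have := hν.isUnifLocDoublingMeasure
  obtain ⟨ε, δ, -, -, hδ0, -, hA⟩ := hA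
  refine IsUnifLocDoublingMeasure.measure_eq_zero_of_eventually_measure_inter_closedBall_le ν
    (θ := ENNReal.ofReal (1 - δ)) (by simpa using hδ0) fun x =>
      eventually_nhdsWithin_of_forall fun r (hr : 0 < r) => ?_
  refine le_mul_measure_closedBall_of_forall_gt ofReal_ne_top
    ⟨r + 1, by linarith, (hν.1 x _ (by linarith)).2.ne⟩ fun r' hr' => ?_
  refine (measure_mono (inter_subset_inter_right E (closedBall_subset_ball hr'))).trans <|
    hA x r' (hr.trans hr') _ (hE.inter measurableSet_ball) inter_subset_right ?_
  rw [measure_mono_null inter_subset_left hμE]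
  exact zero_le

end Doubling

/-- Doubling measures in the `A∞` relation are mutually absolutely continuous. -/
theorem mutuallyAC_of_aInfty {X : Type*} [MetricSpace X] [MeasurableSpace X] [BorelSpace X]
    (μ ν : Measure X) (hμ : IsDoublingMeasure μ) (hν : IsDoublingMeasure ν)
    (hA : AInftyRel μ ν) :
    ∀ E : Set X, MeasurableSet E → (μ E = 0 ↔ ν E = 0) := fun _ hE =>
  ⟨hA.measure_eq_zero hν hE,
    (hA.symm (fun x R hR => (hμ.1 x R hR).2) hν.1).measure_eq_zero hμ hE⟩
end

section
/- Let n ≥ 0 and λ > 0. The Bessel measure dm_λ(x) := x_{n+1}^{2λ} dx on the half-space ℝ^{n+1}_+ := ℝ^n × (0,∞), equipped with the Euclidean metric, is a doubling measure: every metric ball of ℝ^{n+1}_+ has finite positive m_λ-measure, and there is a constant C = C(n,λ) such that m_λ(B(x,2R) ∩ ℝ^{n+1}_+) ≤ C · m_λ(B(x,R) ∩ ℝ^{n+1}_+) for all x ∈ ℝ^{n+1}_+ and R > 0. -/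
/-!
On `B(x, r)` the height `y_i` stays within `r` of `x_i`, so the weight `y_i ^ p` is at most
`(x_i + r) ^ p` there. Conversely, lifting the centre to height `h = max x_i (r / 2)` moves it
by at most `r / 2`, so `B(x', r / 4)` lies in `B(x, r) ∩ {y_i > 0}` and carries weight at least
`(h / 2) ^ p`. As `x_i + 2r ≤ 10 · h / 2` and Lebesgue measure scales like `r ^ d`, the doubling
constant is `10 ^ p · 8 ^ d`.
-/

open MeasureTheory Metric ENNReal Set

namespace MeasureTheory

variable {α : Type*} [MeasurableSpace α] {μ : Measure α} {f : α → ℝ≥0∞} {s : Set α} {c : ℝ≥0∞}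

lemma withDensity_apply_le_mul_of_le [SFinite μ] (h : ∀ x ∈ s, f x ≤ c) :
    μ.withDensity f s ≤ c * μ s := by
  rw [withDensity_apply', ← setLIntegral_const]
  exact setLIntegral_mono measurable_const h

lemma mul_le_withDensity_apply_of_le (hs : MeasurableSet s) (h : ∀ x ∈ s, c ≤ f x) :
    c * μ s ≤ μ.withDensity f s := by
  rw [withDensity_apply _ hs, ← setLIntegral_const]
  exact setLIntegral_mono' hs h

end MeasureTheory

namespace EuclideanSpace

variable {ι : Type*} [Fintype ι] {x y : EuclideanSpace ℝ ι} {r : ℝ}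

lemma abs_apply_sub_lt_of_mem_ball (hy : y ∈ ball x r) (i : ι) : |y i - x i| < r :=
  (PiLp.dist_apply_le y x i).trans_lt hy

lemma exists_apply_eq_dist_eq (x : EuclideanSpace ℝ ι) (i : ι) (t : ℝ) :
    ∃ x' : EuclideanSpace ℝ ι, x' i = t ∧ dist x' x = |t - x i| := by
  classical
  refine ⟨x + (t - x i) • PiLp.single 2 i (1 : ℝ), by simp, ?_⟩
  rw [dist_eq_norm, add_sub_cancel_left, norm_smul, PiLp.norm_single, norm_one, mul_one,
    Real.norm_eq_abs]

end EuclideanSpace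

open EuclideanSpace

/-- For `p = 2λ` and `i` the last coordinate this is the Bessel measure `m_λ`. -/
noncomputable def heightWeightedVolume {ι : Type*} [Fintype ι] (i : ι) (p : ℝ) :
    Measure (EuclideanSpace ℝ ι) :=
  volume.withDensity fun y => ENNReal.ofReal (y i ^ p)

variable {ι : Type*} [Fintype ι] (i : ι) {p : ℝ}

lemma heightWeightedVolume_ball_inter_le (hp : 0 ≤ p) (x : EuclideanSpace ℝ ι) (r : ℝ) :
    heightWeightedVolume i p (ball x r ∩ {y | 0 < y i}) ≤
      ENNReal.ofReal ((x i + r) ^ p) * volume (ball x r) := by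
  grw [← measure_mono (μ := volume) inter_subset_left]
  refine withDensity_apply_le_mul_of_le fun y hy => ?_
  have hyx := (abs_lt.mp (abs_apply_sub_lt_of_mem_ball hy.1 i)).2
  exact ENNReal.ofReal_le_ofReal (Real.rpow_le_rpow hy.2.le (by linarith) hp)

lemma ofReal_mul_volume_ball_le_heightWeightedVolume (hp : 0 ≤ p) {x : EuclideanSpace ℝ ι}
    (hx : 0 ≤ x i) {r : ℝ} (hr : 0 < r) :
    ENNReal.ofReal ((max (x i) (r / 2) / 2) ^ p) * volume (ball x (r / 4)) ≤
      heightWeightedVolume i p (ball x r ∩ {y | 0 < y i}) := by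
  set h := max (x i) (r / 2)
  obtain ⟨x', hx'i, hx'x⟩ := exists_apply_eq_dist_eq x i h
  have hlift : dist x' x ≤ r / 2 := by
    rw [hx'x, abs_of_nonneg (by simp [h])]
    linarith [max_le_add_of_nonneg hx (by positivity : 0 ≤ r / 2)]
  have hlow : ∀ y ∈ ball x' (r / 4), h / 2 ≤ y i := fun y hy => by
    have := (abs_lt.mp (abs_apply_sub_lt_of_mem_ball hy i)).1
    linarith [le_max_right (x i) (r / 2)]
  have hsub : ball x' (r / 4) ⊆ ball x r ∩ {y | 0 < y i} := fun y hy =>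
    ⟨ball_subset_ball' (by linarith) hy,
      (by positivity : 0 < h / 2).trans_le (hlow y hy)⟩
  rw [Measure.addHaar_ball_center, ← Measure.addHaar_ball_center volume x']
  refine (mul_le_withDensity_apply_of_le measurableSet_ball fun y hy => ?_).trans
    (measure_mono hsub)
  exact ENNReal.ofReal_le_ofReal (Real.rpow_le_rpow (by positivity) (hlow y hy) hp)

lemma heightWeightedVolume_ball_inter_pos (hp : 0 ≤ p) {x : EuclideanSpace ℝ ι} (hx : 0 ≤ x i)
    {r : ℝ} (hr : 0 < r) : 0 < heightWeightedVolume i p (ball x r ∩ {y | 0 < y i}) := by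
  refine lt_of_lt_of_le ?_ (ofReal_mul_volume_ball_le_heightWeightedVolume i hp hx hr)
  refine ENNReal.mul_pos ?_ (measure_ball_pos _ _ (by positivity)).ne'
  have : 0 < max (x i) (r / 2) := lt_max_of_lt_right (by positivity)
  exact (ENNReal.ofReal_pos.mpr (by positivity)).ne'

lemma heightWeightedVolume_ball_inter_lt_top (hp : 0 ≤ p) (x : EuclideanSpace ℝ ι) (r : ℝ) :
    heightWeightedVolume i p (ball x r ∩ {y | 0 < y i}) < ∞ :=
  (heightWeightedVolume_ball_inter_le i hp x r).trans_lt
    (ENNReal.mul_lt_top ofReal_lt_top measure_ball_lt_top)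

theorem heightWeightedVolume_ball_two_mul_inter_le (hp : 0 ≤ p) {x : EuclideanSpace ℝ ι}
    (hx : 0 ≤ x i) {r : ℝ} (hr : 0 < r) :
    heightWeightedVolume i p (ball x (2 * r) ∩ {y | 0 < y i}) ≤
      ENNReal.ofReal (10 ^ p * 8 ^ Fintype.card ι) *
        heightWeightedVolume i p (ball x r ∩ {y | 0 < y i}) := by
  set h := max (x i) (r / 2)
  have hh : x i + 2 * r ≤ 10 * (h / 2) := by
    linarith [le_max_left (x i) (r / 2), le_max_right (x i) (r / 2)]
  calc heightWeightedVolume i p (ball x (2 * r) ∩ {y | 0 < y i})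
      ≤ ENNReal.ofReal ((x i + 2 * r) ^ p) * volume (ball x (8 * (r / 4))) := by
        rw [show 8 * (r / 4) = 2 * r by ring]
        exact heightWeightedVolume_ball_inter_le i hp x (2 * r)
    _ ≤ ENNReal.ofReal ((10 * (h / 2)) ^ p) * volume (ball x (8 * (r / 4))) := by
        gcongr
    _ = ENNReal.ofReal (10 ^ p * 8 ^ Fintype.card ι) *
          (ENNReal.ofReal ((h / 2) ^ p) * volume (ball x (r / 4))) := by
        have : 0 ≤ h / 2 := by positivity
        rw [Measure.addHaar_ball_mul_of_pos _ _ (by norm_num), finrank_euclideanSpace,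
          ← Measure.addHaar_ball_center volume x, Real.mul_rpow (by norm_num) this,
          ENNReal.ofReal_mul (by positivity), ENNReal.ofReal_mul (by positivity)]
        ring
    _ ≤ ENNReal.ofReal (10 ^ p * 8 ^ Fintype.card ι) *
          heightWeightedVolume i p (ball x r ∩ {y | 0 < y i}) := by
        gcongr
        exact ofReal_mul_volume_ball_le_heightWeightedVolume i hp hx hr

/-- The Bessel measure `dm_λ = x_{n+1}^{2λ} dx` on the half-space
`ℝ^{n+1}_+`, with the Euclidean metric, is doubling: balls of the half-space have finite
positive measure, and `m_λ(B(x,2R) ∩ ℝ^{n+1}_+) ≤ C m_λ(B(x,R) ∩ ℝ^{n+1}_+)`. -/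
theorem besselMeasure_isDoubling (n : ℕ) (lam : ℝ) (hlam : 0 < lam) :
    (∀ x : EuclideanSpace ℝ (Fin (n + 1)), 0 < x (Fin.last n) → ∀ R : ℝ, 0 < R →
      0 < ((volume : Measure (EuclideanSpace ℝ (Fin (n + 1)))).withDensity
            (fun y => ENNReal.ofReal (y (Fin.last n) ^ (2 * lam))))
          (ball x R ∩ {y | 0 < y (Fin.last n)}) ∧
      ((volume : Measure (EuclideanSpace ℝ (Fin (n + 1)))).withDensity
            (fun y => ENNReal.ofReal (y (Fin.last n) ^ (2 * lam))))
          (ball x R ∩ {y | 0 < y (Fin.last n)}) < ∞) ∧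
    ∃ C : ℝ, 0 < C ∧
      ∀ x : EuclideanSpace ℝ (Fin (n + 1)), 0 < x (Fin.last n) → ∀ R : ℝ, 0 < R →
        ((volume : Measure (EuclideanSpace ℝ (Fin (n + 1)))).withDensity
            (fun y => ENNReal.ofReal (y (Fin.last n) ^ (2 * lam))))
          (ball x (2 * R) ∩ {y | 0 < y (Fin.last n)}) ≤
        ENNReal.ofReal C *
          ((volume : Measure (EuclideanSpace ℝ (Fin (n + 1)))).withDensity
              (fun y => ENNReal.ofReal (y (Fin.last n) ^ (2 * lam))))
            (ball x R ∩ {y | 0 < y (Fin.last n)}) := by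
  have hp : 0 ≤ 2 * lam := by positivity
  refine ⟨fun x hx R hR => ⟨heightWeightedVolume_ball_inter_pos _ hp hx.le hR,
      heightWeightedVolume_ball_inter_lt_top _ hp x R⟩,
    10 ^ (2 * lam) * 8 ^ (n + 1), by positivity, fun x hx R hR => ?_⟩
  have hdoubling := heightWeightedVolume_ball_two_mul_inter_le (Fin.last n) hp hx.le hR
  rwa [Fintype.card_fin] at hdoubling
end

section
/- Let n ≥ 0 and λ > 0. The Bessel measure dm_λ(x) := x_{n+1}^{2λ} dx and the Lebesgue measure on the half-space ℝ^{n+1}_+ := ℝ^n × (0,∞) (with the Euclidean metric) satisfy the A∞ relation: there exist ε, δ ∈ (0,1) such that for every metric ball B of ℝ^{n+1}_+ and every measurable E ⊆ B, m_λ(E) ≤ ε m_λ(B) implies |E| ≤ (1−δ)|B|, where |·| denotes Lebesgue measure. -/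
/-!
On the trace `Q = B(x, R) ∩ ℝ^{n+1}_+` of a ball centred in the half-space, the weight
`y_{n+1}^{2λ}` is at most `(x_{n+1} + R)^{2λ}`, while on the ball `B(x + (R/2) e_{n+1}, R/4) ⊆ Q`
it is at least `((x_{n+1} + R)/4)^{2λ}`. Hence `m_λ(Q) ≥ c · sup_Q(weight) · |Q|` with
`c = 4^{-2λ-(n+1)}`, independent of the ball. If `m_λ(E) ≤ m_λ(Q)/2`, then
`sup_Q(weight) · |Q \ E| ≥ m_λ(Q \ E) ≥ m_λ(Q)/2 ≥ (c/2) · sup_Q(weight) · |Q|`, so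
`|E| ≤ (1 - c/2) |Q|`.
-/

open MeasureTheory Metric ENNReal Set

section WithDensity

variable {α : Type*} [MeasurableSpace α] {ν : Measure α} {f : α → ℝ≥0∞} {s : Set α}
  {A : ℝ≥0∞}

theorem withDensity_apply_le_mul (hs : MeasurableSet s) (hf : ∀ y ∈ s, f y ≤ A) :
    ν.withDensity f s ≤ A * ν s := by
  rw [withDensity_apply f hs, ← setLIntegral_const]
  exact setLIntegral_mono' hs hf

theorem mul_le_withDensity_apply (hs : MeasurableSet s) (hf : ∀ y ∈ s, A ≤ f y) :
    A * ν s ≤ ν.withDensity f s := by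
  rw [withDensity_apply f hs, ← setLIntegral_const]
  exact setLIntegral_mono' hs hf

end WithDensity

section AInfty

variable {α : Type*} [MeasurableSpace α] {Q E : Set α}

theorem measure_le_ofReal_one_sub_mul_iff {μ : Measure α} (hE : MeasurableSet E) (hEQ : E ⊆ Q)
    (hQ : μ Q ≠ ∞) {δ : ℝ} (hδ₀ : 0 ≤ δ) (hδ₁ : δ ≤ 1) :
    μ E ≤ ENNReal.ofReal (1 - δ) * μ Q ↔ ENNReal.ofReal δ * μ Q ≤ μ (Q \ E) := by
  have hEQ' : μ E ≤ μ Q := measure_mono hEQ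
  have hδQ : ENNReal.ofReal δ * μ Q ≤ μ Q :=
    mul_le_of_le_one_left' (ENNReal.ofReal_le_one.2 hδ₁)
  rw [measure_sdiff hEQ hE.nullMeasurableSet (ne_top_of_le_ne_top hQ hEQ'),
    ENNReal.ofReal_sub _ hδ₀, ofReal_one, ENNReal.sub_mul (fun _ _ => hQ), one_mul,
    ENNReal.le_sub_iff_add_le_left (ne_top_of_le_ne_top hQ hδQ) hδQ,
    ENNReal.le_sub_iff_add_le_right (ne_top_of_le_ne_top hQ hEQ') hEQ', add_comm]

theorem measure_le_ofReal_one_sub_mul_of_withDensity_le {ν : Measure α} {f : α → ℝ≥0∞}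
    (hQ : MeasurableSet Q) (hνQ : ν Q ≠ ∞) (hE : MeasurableSet E) (hEQ : E ⊆ Q) {A : ℝ≥0∞}
    (hA₀ : A ≠ 0) (hA : A ≠ ∞) (hfA : ∀ y ∈ Q, f y ≤ A) {c ε : ℝ} (hc₀ : 0 ≤ c) (hc₁ : c ≤ 1)
    (hε₀ : 0 ≤ ε) (hε₁ : ε ≤ 1)
    (hcQ : ENNReal.ofReal c * A * ν Q ≤ ν.withDensity f Q)
    (hεE : ν.withDensity f E ≤ ENNReal.ofReal ε * ν.withDensity f Q) :
    ν E ≤ ENNReal.ofReal (1 - (1 - ε) * c) * ν Q := by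
  have hμQ : ν.withDensity f Q ≠ ∞ :=
    ne_top_of_le_ne_top (mul_ne_top hA hνQ) (withDensity_apply_le_mul hQ hfA)
  have h1ε : 0 ≤ 1 - ε := sub_nonneg.2 hε₁
  have hμ_compl : ENNReal.ofReal (1 - ε) * ν.withDensity f Q ≤ ν.withDensity f (Q \ E) :=
    (measure_le_ofReal_one_sub_mul_iff hE hEQ hμQ h1ε (by linarith)).1
      (by rwa [_root_.sub_sub_cancel])
  refine (measure_le_ofReal_one_sub_mul_iff hE hEQ hνQ (mul_nonneg h1ε hc₀)
    (mul_le_one₀ (by linarith) hc₀ hc₁)).2 ?_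
  rw [← ENNReal.mul_le_mul_iff_right hA₀ hA]
  calc A * (ENNReal.ofReal ((1 - ε) * c) * ν Q)
      = ENNReal.ofReal (1 - ε) * (ENNReal.ofReal c * A * ν Q) := by
        rw [ENNReal.ofReal_mul h1ε]; ring
    _ ≤ ENNReal.ofReal (1 - ε) * ν.withDensity f Q := by gcongr
    _ ≤ ν.withDensity f (Q \ E) := hμ_compl
    _ ≤ A * ν (Q \ E) := withDensity_apply_le_mul (hQ.diff hE) fun y hy => hfA y hy.1

end AInfty

namespace EuclideanSpace

variable {ι : Type*} [Fintype ι] {x y : EuclideanSpace ℝ ι} {R : ℝ}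

theorem apply_lt_add_of_mem_ball (hy : y ∈ ball x R) (j : ι) : y j < x j + R := by
  have := (PiLp.dist_apply_le y x j).trans_lt hy
  rw [Real.dist_eq] at this
  linarith [le_abs_self (y j - x j)]

theorem sub_lt_apply_of_mem_ball (hy : y ∈ ball x R) (j : ι) : x j - R < y j := by
  have := (PiLp.dist_apply_le x y j).trans_lt (mem_ball_comm.1 hy)
  rw [Real.dist_eq] at this
  linarith [le_abs_self (x j - y j)]

theorem mem_ball_of_mem_ball_add_single [DecidableEq ι] {j : ι}
    (hy : y ∈ ball (x + EuclideanSpace.single j (R / 2)) (R / 4)) :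
    y ∈ ball x R ∧ x j + R / 4 < y j := by
  have hR : 0 < R := by have := nonempty_ball.1 ⟨y, hy⟩; linarith
  have hcentre : dist (x + EuclideanSpace.single j (R / 2)) x = R / 2 := by
    rw [dist_eq_norm, add_sub_cancel_left, PiLp.norm_single, Real.norm_eq_abs,
      abs_of_pos (by positivity)]
  refine ⟨mem_ball.2 ?_, ?_⟩
  · linarith [dist_triangle y (x + EuclideanSpace.single j (R / 2)) x, mem_ball.1 hy]
  · have := sub_lt_apply_of_mem_ball hy j
    rw [PiLp.add_apply, PiLp.single_apply, if_pos rfl] at this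
    linarith

end EuclideanSpace

open EuclideanSpace in
theorem ofReal_mul_volume_ball_inter_le_withDensity {ι : Type*} [Fintype ι] (j : ι) {p : ℝ}
    (hp : 0 ≤ p) {x : EuclideanSpace ℝ ι} (hx : 0 ≤ x j) {R : ℝ} (hR : 0 < R) :
    ENNReal.ofReal ((1 / 4) ^ p * (1 / 4) ^ Fintype.card ι) * ENNReal.ofReal ((x j + R) ^ p) *
        volume (ball x R ∩ {y | 0 < y j}) ≤
      (volume : Measure (EuclideanSpace ℝ ι)).withDensity (fun y => ENNReal.ofReal (y j ^ p))
        (ball x R ∩ {y | 0 < y j}) := by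
  classical
  set d := Fintype.card ι with hd
  set M := x j + R
  set c : ℝ := (1 / 4) ^ p * (1 / 4) ^ d
  set z := x + EuclideanSpace.single j (R / 2)
  have hM₀ : 0 < M := by positivity
  have hpow : c * M ^ p * R ^ d = (M / 4) ^ p * (R / 4) ^ d := by
    simp only [c]
    rw [Real.div_rpow hM₀.le (by norm_num), Real.div_rpow zero_le_one (by norm_num),
      Real.one_rpow]
    simp only [div_pow, one_pow]
    ring
  calc ENNReal.ofReal c * ENNReal.ofReal (M ^ p) * volume (ball x R ∩ {y | 0 < y j})
      ≤ ENNReal.ofReal c * ENNReal.ofReal (M ^ p) * volume (ball x R) := by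
        gcongr; exact inter_subset_left
    _ = ENNReal.ofReal ((M / 4) ^ p) * volume (ball z (R / 4)) := by
      rw [Measure.addHaar_ball_of_pos _ x hR, Measure.addHaar_ball_of_pos _ z (by positivity),
        finrank_euclideanSpace, ← hd, ← mul_assoc, ← mul_assoc,
        ← ENNReal.ofReal_mul (by positivity : 0 ≤ c), ← ENNReal.ofReal_mul (by positivity),
        hpow, ENNReal.ofReal_mul (by positivity)]
    _ ≤ (volume : Measure (EuclideanSpace ℝ ι)).withDensity (fun y => ENNReal.ofReal (y j ^ p))
        (ball z (R / 4)) := by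
      refine mul_le_withDensity_apply measurableSet_ball fun y hy => ?_
      have := (mem_ball_of_mem_ball_add_single hy).2
      exact ENNReal.ofReal_le_ofReal (Real.rpow_le_rpow (by positivity) (by linarith) hp)
    _ ≤ _ := by
      refine measure_mono fun y hy => ?_
      have := mem_ball_of_mem_ball_add_single hy
      exact ⟨this.1, show 0 < y j by linarith⟩

/-- The Bessel measure `m_λ` and the Lebesgue measure on the half-space
`ℝ^{n+1}_+` satisfy the `A∞` relation. -/
theorem besselMeasure_aInfty_lebesgue (n : ℕ) (lam : ℝ) (hlam : 0 < lam) :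
    ∃ ε δ : ℝ, 0 < ε ∧ ε < 1 ∧ 0 < δ ∧ δ < 1 ∧
      ∀ x : EuclideanSpace ℝ (Fin (n + 1)), 0 < x (Fin.last n) → ∀ R : ℝ, 0 < R →
        ∀ E : Set (EuclideanSpace ℝ (Fin (n + 1))), MeasurableSet E →
          E ⊆ ball x R ∩ {y | 0 < y (Fin.last n)} →
          ((volume : Measure (EuclideanSpace ℝ (Fin (n + 1)))).withDensity
              (fun y => ENNReal.ofReal (y (Fin.last n) ^ (2 * lam)))) E ≤
            ENNReal.ofReal ε *
              ((volume : Measure (EuclideanSpace ℝ (Fin (n + 1)))).withDensity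
                  (fun y => ENNReal.ofReal (y (Fin.last n) ^ (2 * lam))))
                (ball x R ∩ {y | 0 < y (Fin.last n)}) →
          volume E ≤
            ENNReal.ofReal (1 - δ) * volume (ball x R ∩ {y | 0 < y (Fin.last n)}) := by
  have hp : 0 ≤ 2 * lam := by positivity
  set c : ℝ := (1 / 4) ^ (2 * lam) * (1 / 4) ^ (n + 1)
  have hc₀ : 0 < c := by positivity
  have hc₁ : c ≤ 1 :=
    mul_le_one₀ (Real.rpow_le_one (by norm_num) (by norm_num) hp) (by positivity)
      (pow_le_one₀ (by norm_num) (by norm_num))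
  refine ⟨1 / 2, (1 - 1 / 2) * c, by norm_num, by norm_num, by positivity, by linarith, ?_⟩
  intro x hx R hR E hE hEQ hεE
  have hQ : MeasurableSet (ball x R ∩ {y | 0 < y (Fin.last n)}) :=
    measurableSet_ball.inter (measurableSet_lt measurable_const (by fun_prop))
  have hνQ : volume (ball x R ∩ {y | 0 < y (Fin.last n)}) ≠ ∞ :=
    ((measure_mono inter_subset_left).trans_lt measure_ball_lt_top).ne
  have hweight_le : ∀ y ∈ ball x R ∩ {y | 0 < y (Fin.last n)},
      ENNReal.ofReal (y (Fin.last n) ^ (2 * lam)) ≤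
        ENNReal.ofReal ((x (Fin.last n) + R) ^ (2 * lam)) :=
    fun y ⟨hyB, hyH⟩ => ENNReal.ofReal_le_ofReal <|
      Real.rpow_le_rpow hyH.le (EuclideanSpace.apply_lt_add_of_mem_ball hyB _).le hp
  have hweight_mean := ofReal_mul_volume_ball_inter_le_withDensity (Fin.last n) hp hx.le hR
  rw [Fintype.card_fin] at hweight_mean
  exact measure_le_ofReal_one_sub_mul_of_withDensity_le hQ hνQ hE hEQ
    (ENNReal.ofReal_pos.2 (Real.rpow_pos_of_pos (by positivity) _)).ne' ofReal_ne_top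
    hweight_le hc₀.le hc₁ (by norm_num) (by norm_num) hweight_mean hεE
end

section
/- Let (X,ρ) be a metric space, μ a Borel measure on X all of whose balls have finite positive measure, w : X → [0,∞] measurable, ν the measure with dν = w dμ, and suppose there are t ∈ (1,∞) and C₀ ≥ 1 such that (μ(B)⁻¹ ∫_B w^t dμ)^{1/t} ≤ C₀ ν(B)/μ(B) for every metric ball B (with ν(B) finite and positive). Let t' = t/(t−1), let r, p ∈ (0,∞), and let (B_j)_{j∈ℕ} be any countable family of metric balls of X. Then for every measurable function f, (∑_{j} osc_{r,ν}(f;B_j)^p)^{1/p} ≤ C₀^{1/r} (∑_{j} osc_{rt',μ}(f;B_j)^p)^{1/p}. -/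
open MeasureTheory Metric ENNReal Set

/-! On a set `E` of finite positive `μ`-measure, the `ν`-average of `g ≥ 0` is
`⨍_E w g dμ / ⨍_E w dμ`. Hölder's inequality for averages with exponents `t, t'` bounds the
numerator by `(⨍_E w^t)^{1/t} (⨍_E g^{t'})^{1/t'}`, and the reverse Hölder inequality turns the
first factor into `C₀ ⨍_E w`, which cancels the denominator. Taking `g = |f - c|^r` and the
infimum over `c` compares the oscillations ball by ball, and the `ℓ^p` sum follows. -/

section Averages

variable {α : Type*} [MeasurableSpace α] {μ : Measure α}

theorem laverage_mul_le_Lp_mul_Lq {p q : ℝ} (hpq : p.HolderConjugate q) {f g : α → ℝ≥0∞}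
    (hf : AEMeasurable f μ) (hg : AEMeasurable g μ) :
    ⨍⁻ x, f x * g x ∂μ ≤ (⨍⁻ x, f x ^ p ∂μ) ^ (1 / p) * (⨍⁻ x, g x ^ q ∂μ) ^ (1 / q) :=
  ENNReal.lintegral_mul_le_Lp_mul_Lq _ hpq (hf.smul_measure _) (hg.smul_measure _)

theorem setLAverage_withDensity {w g : α → ℝ≥0∞} (hw : Measurable w) (hg : Measurable g)
    {s : Set α} (hs : MeasurableSet s) (hμ₀ : μ s ≠ 0) (hμ : μ s ≠ ∞) :
    ⨍⁻ x in s, g x ∂μ.withDensity w = (⨍⁻ x in s, w x * g x ∂μ) / ⨍⁻ x in s, w x ∂μ := by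
  have hν : μ.withDensity w s = ∫⁻ x in s, w x ∂μ := withDensity_apply w hs
  rw [setLAverage_eq, setLAverage_eq, setLAverage_eq, hν, restrict_withDensity hs,
    lintegral_withDensity_eq_lintegral_mul _ hw hg,
    ← ENNReal.mul_div_mul_right _ _ (ENNReal.inv_ne_zero.2 hμ) (ENNReal.inv_ne_top.2 hμ₀)]
  rfl

theorem setLAverage_withDensity_le_of_reverseHolder {w g : α → ℝ≥0∞} (hw : Measurable w)
    (hg : Measurable g) {s : Set α} (hs : MeasurableSet s) (hμ₀ : μ s ≠ 0) (hμ : μ s ≠ ∞)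
    {t t' : ℝ} (htt' : t.HolderConjugate t') {C : ℝ≥0∞}
    (hRH : (⨍⁻ x in s, w x ^ t ∂μ) ^ (1 / t) ≤ C * ⨍⁻ x in s, w x ∂μ) :
    ⨍⁻ x in s, g x ∂μ.withDensity w ≤ C * (⨍⁻ x in s, g x ^ t' ∂μ) ^ (1 / t') := by
  rw [setLAverage_withDensity hw hg hs hμ₀ hμ]
  refine ENNReal.div_le_of_le_mul ?_
  calc ⨍⁻ x in s, w x * g x ∂μ
      ≤ (⨍⁻ x in s, w x ^ t ∂μ) ^ (1 / t) * (⨍⁻ x in s, g x ^ t' ∂μ) ^ (1 / t') :=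
        laverage_mul_le_Lp_mul_Lq htt' hw.aemeasurable hg.aemeasurable
    _ ≤ (C * ⨍⁻ x in s, w x ∂μ) * (⨍⁻ x in s, g x ^ t' ∂μ) ^ (1 / t') := by gcongr
    _ = C * (⨍⁻ x in s, g x ^ t' ∂μ) ^ (1 / t') * ⨍⁻ x in s, w x ∂μ := by ring

theorem osc_eq_iInf_setLAverage (r : ℝ) (μ : Measure α) (s : Set α) (f : α → ℝ) :
    osc r μ s f = ⨅ c : ℝ, (⨍⁻ x in s, ENNReal.ofReal |f x - c| ^ r ∂μ) ^ (1 / r) := by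
  simp only [osc, setLAverage_eq, div_eq_mul_inv, mul_comm]

theorem osc_withDensity_le_of_reverseHolder {w : α → ℝ≥0∞} (hw : Measurable w) {f : α → ℝ}
    (hf : Measurable f) {s : Set α} (hs : MeasurableSet s) (hμ₀ : μ s ≠ 0) (hμ : μ s ≠ ∞)
    {t t' : ℝ} (htt' : t.HolderConjugate t') {C : ℝ≥0∞} (hC : C ≠ ∞)
    (hRH : (⨍⁻ x in s, w x ^ t ∂μ) ^ (1 / t) ≤ C * ⨍⁻ x in s, w x ∂μ) {r : ℝ} (hr : 0 < r) :
    osc r (μ.withDensity w) s f ≤ C ^ (1 / r) * osc (r * t') μ s f := by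
  have hCr : C ^ (1 / r) ≠ ∞ := ENNReal.rpow_ne_top_of_nonneg (by positivity) hC
  rw [osc_eq_iInf_setLAverage, osc_eq_iInf_setLAverage,
    ENNReal.mul_iInf fun h => absurd h hCr]
  refine iInf_mono fun c => ?_
  have hg : Measurable fun x => ENNReal.ofReal |f x - c| ^ r :=
    (hf.sub_const c).abs.ennreal_ofReal.pow_const r
  have ht' : 0 < t' := htt'.symm.pos
  calc (⨍⁻ x in s, ENNReal.ofReal |f x - c| ^ r ∂μ.withDensity w) ^ (1 / r)
      ≤ (C * (⨍⁻ x in s, (ENNReal.ofReal |f x - c| ^ r) ^ t' ∂μ) ^ (1 / t')) ^ (1 / r) := by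
        gcongr
        exact setLAverage_withDensity_le_of_reverseHolder hw hg hs hμ₀ hμ htt' hRH
    _ = C ^ (1 / r) * (⨍⁻ x in s, ENNReal.ofReal |f x - c| ^ (r * t') ∂μ) ^ (1 / (r * t')) := by
        simp only [← ENNReal.rpow_mul, ENNReal.mul_rpow_of_nonneg _ _ (by positivity : 0 ≤ 1 / r),
          one_div_mul_one_div, mul_comm t' r]

end Averages

theorem tsum_rpow_one_div_le_mul_of_forall_le_mul {ι : Type*} {a b : ι → ℝ≥0∞} {K : ℝ≥0∞}
    {p : ℝ} (hp : 0 < p) (hab : ∀ i, a i ≤ K * b i) :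
    (∑' i, a i ^ p) ^ (1 / p) ≤ K * (∑' i, b i ^ p) ^ (1 / p) := by
  have hsum : ∑' i, a i ^ p ≤ K ^ p * ∑' i, b i ^ p := by
    rw [← ENNReal.tsum_mul_left]
    refine ENNReal.tsum_le_tsum fun i => ?_
    rw [← ENNReal.mul_rpow_of_nonneg _ _ hp.le]
    exact ENNReal.rpow_le_rpow (hab i) hp.le
  calc (∑' i, a i ^ p) ^ (1 / p) ≤ (K ^ p * ∑' i, b i ^ p) ^ (1 / p) := by gcongr
    _ = K * (∑' i, b i ^ p) ^ (1 / p) := by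
        rw [ENNReal.mul_rpow_of_nonneg _ _ (by positivity), ← ENNReal.rpow_mul,
          mul_one_div_cancel hp.ne', ENNReal.rpow_one]

theorem osc_family_le_of_reverseHolder_general {X : Type*}
    [MetricSpace X] [MeasurableSpace X] [BorelSpace X]
    (μ : Measure X)
    (hballs : ∀ (x : X) (R : ℝ), 0 < R → 0 < μ (ball x R) ∧ μ (ball x R) < ∞)
    (w : X → ℝ≥0∞) (hw : Measurable w) (ν : Measure X) (hν : ν = μ.withDensity w)
    (t : ℝ) (ht : 1 < t) (C₀ : ℝ)
    (hRH : ∀ (x : X) (R : ℝ), 0 < R →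
      ((μ (ball x R))⁻¹ * ∫⁻ y in ball x R, w y ^ t ∂μ) ^ (1 / t) ≤
        ENNReal.ofReal C₀ * (ν (ball x R) / μ (ball x R)))
    (r p : ℝ) (hr : 0 < r) (hp : 0 < p)
    (x : ℕ → X) (R : ℕ → ℝ) (hR : ∀ j : ℕ, 0 < R j) :
    ∀ f : X → ℝ, Measurable f →
      (∑' j : ℕ, osc r ν (ball (x j) (R j)) f ^ p) ^ (1 / p) ≤
        ENNReal.ofReal C₀ ^ (1 / r) *
          (∑' j : ℕ, osc (r * (t / (t - 1))) μ (ball (x j) (R j)) f ^ p) ^ (1 / p) := by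
  intro f hf
  subst hν
  refine tsum_rpow_one_div_le_mul_of_forall_le_mul hp fun j => ?_
  obtain ⟨hμ₀, hμ⟩ := hballs (x j) (R j) (hR j)
  have hRHj : (⨍⁻ y in ball (x j) (R j), w y ^ t ∂μ) ^ (1 / t) ≤
      ENNReal.ofReal C₀ * ⨍⁻ y in ball (x j) (R j), w y ∂μ := by
    rw [setLAverage_eq, setLAverage_eq, ← withDensity_apply w measurableSet_ball,
      ENNReal.div_eq_inv_mul]
    exact hRH (x j) (R j) (hR j)
  exact osc_withDensity_le_of_reverseHolder hw hf measurableSet_ball hμ₀.ne' hμ.ne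
    (Real.HolderConjugate.conjExponent ht) ENNReal.ofReal_ne_top hRHj hr

/-- Family (ℓ^p) version of the per-ball oscillation comparison under the
reverse Hölder hypothesis. -/
theorem osc_family_le_of_reverseHolder {X : Type*}
    [MetricSpace X] [MeasurableSpace X] [BorelSpace X]
    (μ : Measure X)
    (hballs : ∀ (x : X) (R : ℝ), 0 < R → 0 < μ (ball x R) ∧ μ (ball x R) < ∞)
    (w : X → ℝ≥0∞) (hw : Measurable w) (ν : Measure X) (hν : ν = μ.withDensity w)
    (t : ℝ) (ht : 1 < t) (C₀ : ℝ) (hC₀ : 1 ≤ C₀)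
    (hballsν : ∀ (x : X) (R : ℝ), 0 < R → 0 < ν (ball x R) ∧ ν (ball x R) < ∞)
    (hRH : ∀ (x : X) (R : ℝ), 0 < R →
      ((μ (ball x R))⁻¹ * ∫⁻ y in ball x R, w y ^ t ∂μ) ^ (1 / t) ≤
        ENNReal.ofReal C₀ * (ν (ball x R) / μ (ball x R)))
    (r p : ℝ) (hr : 0 < r) (hp : 0 < p)
    (x : ℕ → X) (R : ℕ → ℝ) (hR : ∀ j : ℕ, 0 < R j) :
    ∀ f : X → ℝ, Measurable f →
      (∑' j : ℕ, osc r ν (ball (x j) (R j)) f ^ p) ^ (1 / p) ≤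
        ENNReal.ofReal C₀ ^ (1 / r) *
          (∑' j : ℕ, osc (r * (t / (t - 1))) μ (ball (x j) (R j)) f ^ p) ^ (1 / p) :=
  osc_family_le_of_reverseHolder_general μ hballs w hw ν hν t ht C₀ hRH r p hr hp x R hR
end
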